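/- (Core identity for the feedback particle filter, dt-coefficient.) Let p : ℝ^d → (0,∞) be twice continuously differentiable, let h : ℝ^d → ℝ be twice continuously differentiable, let ĥ ∈ ℝ, and let K : ℝ^d → ℝ^d be twice continuously differentiable such that the divergence equation ∇·(pK)(x) = −( h(x) − ĥ ) p(x) holds for all x. Define Ω : ℝ^d → ℝ^d by Ω_l = (1/2) Σ_{k=1}^d K_k ∂K_l/∂x_k, and define u = −(1/2) K (h + ĥ) + Ω. Then the pointwise identity −∇·(p u)(x) + (1/2) Σ_{l,k=1}^d ∂²( p K_l K_k )/∂x_l ∂x_k (x) = ∇·(pK)(x) · ĥ = −( h(x) − ĥ ) ĥ p(x) holds for all x ∈ ℝ^d. -/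

import Mathlib

/-!
By the product rule, the row divergences of the matrix field `p K Kᵀ` are
`∑_k ∂_k (p K_l K_k) = K_l ∇·(pK) + p ∑_k K_k ∂_k K_l = -(h - ĥ) p K_l + 2 p Ω_l`,
which by the definition of `u` is `2 (p u_l + ĥ p K_l)`. Hence the second-order term
`(1/2) ∑_{l,k} ∂_l ∂_k (p K_l K_k)` is the divergence of `p u + ĥ p K`, and the `∇·(pu)`
contributions cancel, leaving `ĥ ∇·(pK)`.
-/

open MeasureTheory Real

/-- Divergence `∇·V = ∑_j ∂V_j/∂x_j` of a vector field on `ℝ^d`. -/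
noncomputable def diverg {d : ℕ}
    (V : EuclideanSpace ℝ (Fin d) → EuclideanSpace ℝ (Fin d))
    (x : EuclideanSpace ℝ (Fin d)) : ℝ :=
  ∑ j, fderiv ℝ (fun y => V y j) x (EuclideanSpace.single j 1)

/-- Second partial derivative `∂²f/∂x_l ∂x_k` of a scalar field on `ℝ^d`. -/
noncomputable def secondPartial {d : ℕ} (f : EuclideanSpace ℝ (Fin d) → ℝ)
    (x : EuclideanSpace ℝ (Fin d)) (l k : Fin d) : ℝ :=
  fderiv ℝ (fun y => fderiv ℝ f y (EuclideanSpace.single k 1)) x (EuclideanSpace.single l 1)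

section Divergence

variable {d : ℕ}

noncomputable def partialDeriv (k : Fin d) (f : EuclideanSpace ℝ (Fin d) → ℝ)
    (y : EuclideanSpace ℝ (Fin d)) : ℝ :=
  fderiv ℝ f y (EuclideanSpace.single k 1)

theorem diverg_eq_sum_partialDeriv (V : EuclideanSpace ℝ (Fin d) → EuclideanSpace ℝ (Fin d))
    (x : EuclideanSpace ℝ (Fin d)) : diverg V x = ∑ j, partialDeriv j (fun y => V y j) x :=
  rfl

theorem partialDeriv_mul {f g : EuclideanSpace ℝ (Fin d) → ℝ} {y : EuclideanSpace ℝ (Fin d)}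
    (k : Fin d) (hf : DifferentiableAt ℝ f y) (hg : DifferentiableAt ℝ g y) :
    partialDeriv k (fun z => f z * g z) y =
      partialDeriv k f y * g y + f y * partialDeriv k g y := by
  simp only [partialDeriv, fderiv_fun_mul hf hg, add_apply, smul_apply, smul_eq_mul]
  ring

theorem ContDiff.differentiable_partialDeriv {f : EuclideanSpace ℝ (Fin d) → ℝ}
    (hf : ContDiff ℝ 2 f) (k : Fin d) : Differentiable ℝ (partialDeriv k f) :=
  ((hf.fderiv_right (m := 1) le_rfl).clm_apply contDiff_const).differentiable one_ne_zero

theorem diverg_add {V W : EuclideanSpace ℝ (Fin d) → EuclideanSpace ℝ (Fin d)}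
    {x : EuclideanSpace ℝ (Fin d)} (hV : DifferentiableAt ℝ V x)
    (hW : DifferentiableAt ℝ W x) :
    diverg (fun y => V y + W y) x = diverg V x + diverg W x := by
  rw [differentiableAt_piLp] at hV hW
  simp only [diverg, PiLp.add_apply, fderiv_fun_add (hV _) (hW _), add_apply,
    Finset.sum_add_distrib]

theorem diverg_const_smul (c : ℝ) (V : EuclideanSpace ℝ (Fin d) → EuclideanSpace ℝ (Fin d))
    (x : EuclideanSpace ℝ (Fin d)) :
    diverg (fun y => c • V y) x = c * diverg V x := by
  simp only [diverg, Finset.mul_sum]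
  refine Finset.sum_congr rfl fun j _ => ?_
  change fderiv ℝ (c • fun y => V y j) x _ = _
  rw [fderiv_const_smul_field]
  rfl

theorem diverg_smul {g : EuclideanSpace ℝ (Fin d) → ℝ}
    {V : EuclideanSpace ℝ (Fin d) → EuclideanSpace ℝ (Fin d)} {x : EuclideanSpace ℝ (Fin d)}
    (hg : DifferentiableAt ℝ g x) (hV : DifferentiableAt ℝ V x) :
    diverg (fun y => g y • V y) x = g x * diverg V x + ∑ k, V x k * partialDeriv k g x := by
  rw [differentiableAt_piLp] at hV
  simp only [diverg_eq_sum_partialDeriv, Finset.mul_sum, ← Finset.sum_add_distrib]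
  refine Finset.sum_congr rfl fun k _ => ?_
  exact (partialDeriv_mul k hg (hV k)).trans (by ring)

theorem sum_partialDeriv_mul_mul {p : EuclideanSpace ℝ (Fin d) → ℝ}
    {K : EuclideanSpace ℝ (Fin d) → EuclideanSpace ℝ (Fin d)} {y : EuclideanSpace ℝ (Fin d)}
    (hp : DifferentiableAt ℝ p y) (hK : DifferentiableAt ℝ K y) (l : Fin d) :
    ∑ k, partialDeriv k (fun z => p z * K z l * K z k) y =
      K y l * diverg (fun z => p z • K z) y +
        p y * ∑ k, K y k * partialDeriv k (fun z => K z l) y := by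
  have hrow : ∑ k, partialDeriv k (fun z => p z * K z l * K z k) y =
      diverg (fun z => K z l • (p z • K z)) y := by
    rw [diverg_eq_sum_partialDeriv]
    congr! 2 with k
    funext z
    simp only [PiLp.smul_apply, smul_eq_mul]
    ring
  rw [hrow, diverg_smul (V := fun z => p z • K z) ((differentiableAt_piLp 2).mp hK l)
    (hp.smul hK), Finset.mul_sum]
  simp only [PiLp.smul_apply, smul_eq_mul, mul_assoc]

theorem sum_sum_secondPartial_eq_diverg {f : Fin d → Fin d → EuclideanSpace ℝ (Fin d) → ℝ}
    {V : EuclideanSpace ℝ (Fin d) → EuclideanSpace ℝ (Fin d)} {x : EuclideanSpace ℝ (Fin d)}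
    (hf : ∀ l k, DifferentiableAt ℝ (partialDeriv k (f l k)) x)
    (hV : ∀ y l, V y l = ∑ k, partialDeriv k (f l k) y) :
    ∑ l, ∑ k, secondPartial (f l k) x l k = diverg V x := by
  simp only [diverg, hV]
  refine Finset.sum_congr rfl fun l _ => ?_
  rw [fderiv_fun_sum fun k _ => hf l k, sum_apply]
  rfl

end Divergence

theorem fpf_core_identity_general
    {d : ℕ} (p h : EuclideanSpace ℝ (Fin d) → ℝ)
    (hp : ContDiff ℝ 2 p)
    (hh : ContDiff ℝ 2 h) (hhat : ℝ)
    (K : EuclideanSpace ℝ (Fin d) → EuclideanSpace ℝ (Fin d)) (hK : ContDiff ℝ 2 K)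
    (hgain : ∀ x, diverg (fun y => p y • K y) x = -(h x - hhat) * p x)
    (Ω u : EuclideanSpace ℝ (Fin d) → EuclideanSpace ℝ (Fin d))
    (hΩ : Ω = fun x => ∑ l, ((1 / 2 : ℝ) *
      ∑ k, K x k * fderiv ℝ (fun y => K y l) x (EuclideanSpace.single k 1)) •
        EuclideanSpace.single l 1)
    (hu : u = fun x => (-(1 / 2 : ℝ) * (h x + hhat)) • K x + Ω x) :
    ∀ x,
      (-diverg (fun y => p y • u y) x +
        (1 / 2 : ℝ) * ∑ l, ∑ k, secondPartial (fun y => p y * K y l * K y k) x l k =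
          diverg (fun y => p y • K y) x * hhat) ∧
      (-diverg (fun y => p y • u y) x +
        (1 / 2 : ℝ) * ∑ l, ∑ k, secondPartial (fun y => p y * K y l * K y k) x l k =
          -(h x - hhat) * hhat * p x) := by
  intro x
  have hpd : Differentiable ℝ p := hp.differentiable two_ne_zero
  have hhd : Differentiable ℝ h := hh.differentiable two_ne_zero
  have hKd : Differentiable ℝ K := hK.differentiable two_ne_zero
  have hKc : ∀ l, ContDiff ℝ 2 (fun y => K y l) := (contDiff_piLp 2).mp hK
  have hud : Differentiable ℝ u := by
    have hDK := fun l k => (hKc l).differentiable_partialDeriv k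
    rw [hu, hΩ]
    fun_prop
  have hu_apply : ∀ y l, u y l = -(1 / 2) * (h y + hhat) * K y l +
      1 / 2 * ∑ k, K y k * partialDeriv k (fun z => K z l) y := by
    intro y l
    simp [hu, hΩ, Pi.single_apply, partialDeriv]
  have hflux : ∀ y l, ((2 : ℝ) • (p y • u y + hhat • (p y • K y))) l =
      ∑ k, partialDeriv k (fun z => p z * K z l * K z k) y := by
    intro y l
    rw [sum_partialDeriv_mul_mul (hpd y) (hKd y), hgain y]
    simp only [PiLp.smul_apply, PiLp.add_apply, smul_eq_mul, hu_apply]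
    ring
  have hsecond :
      (1 / 2 : ℝ) * ∑ l, ∑ k, secondPartial (fun y => p y * K y l * K y k) x l k =
        diverg (fun y => p y • u y) x + hhat * diverg (fun y => p y • K y) x := by
    rw [sum_sum_secondPartial_eq_diverg (fun l k =>
        (((hp.mul (hKc l)).mul (hKc k)).differentiable_partialDeriv k).differentiableAt) hflux,
      diverg_const_smul,
      diverg_add (V := fun y => p y • u y) (W := fun y => hhat • (p y • K y))
        ((hpd.smul hud) x) ((hpd.smul hKd).const_smul hhat x),
      diverg_const_smul]
    ring
  constructor
  · rw [hsecond]
    ring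
  · rw [hsecond, hgain x]
    ring

/-- **Core identity for the feedback particle filter (dt-coefficient).**  Let
`p > 0` and `h` be `C²`, `ĥ ∈ ℝ`, and let the `C²` gain `K` solve
`∇·(pK) = -(h - ĥ)p` pointwise.  With `Ω_l = (1/2) ∑_k K_k ∂K_l/∂x_k` and
`u = -(1/2)K(h + ĥ) + Ω`, the pointwise identity
`-∇·(pu) + (1/2) ∑_{l,k} ∂²(p K_l K_k)/∂x_l∂x_k = ∇·(pK) ĥ = -(h - ĥ) ĥ p` holds. -/
theorem fpf_core_identity
    {d : ℕ} (p h : EuclideanSpace ℝ (Fin d) → ℝ)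
    (hp : ContDiff ℝ 2 p) (hppos : ∀ x, 0 < p x)
    (hh : ContDiff ℝ 2 h) (hhat : ℝ)
    (K : EuclideanSpace ℝ (Fin d) → EuclideanSpace ℝ (Fin d)) (hK : ContDiff ℝ 2 K)
    (hgain : ∀ x, diverg (fun y => p y • K y) x = -(h x - hhat) * p x)
    (Ω u : EuclideanSpace ℝ (Fin d) → EuclideanSpace ℝ (Fin d))
    (hΩ : Ω = fun x => ∑ l, ((1 / 2 : ℝ) *
      ∑ k, K x k * fderiv ℝ (fun y => K y l) x (EuclideanSpace.single k 1)) •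
        EuclideanSpace.single l 1)
    (hu : u = fun x => (-(1 / 2 : ℝ) * (h x + hhat)) • K x + Ω x) :
    ∀ x,
      (-diverg (fun y => p y • u y) x +
        (1 / 2 : ℝ) * ∑ l, ∑ k, secondPartial (fun y => p y * K y l * K y k) x l k =
          diverg (fun y => p y • K y) x * hhat) ∧
      (-diverg (fun y => p y • u y) x +
        (1 / 2 : ℝ) * ∑ l, ∑ k, secondPartial (fun y => p y * K y l * K y k) x l k =
          -(h x - hhat) * hhat * p x) :=
  fpf_core_identity_general p h hp hh hhat K hK hgain Ω u hΩ hu
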